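/- arXiv:2601.02998 — 3 statements merged into one kernel-verified Lean document; each statement's English description precedes it below -/
import Mathlib

section
/- Let w: Ω → [0,∞) be μ-integrable with ∫ w dμ = 1 and let α ∈ (0,1). Define Φ(t) = (1-α)t - ∫ (t·w - 1)_+ dμ for t ≥ 0. Then there exists t₀ > 0 such that Φ(t) ≥ t(1-α)/2 > 0 for all t ∈ (0, t₀). In particular, sup_{t ≥ 0} Φ(t) > 0 = Φ(0). -/
open MeasureTheory

open Filter in
private lemma tail_integrable {Ω : Type*} [MeasurableSpace Ω] {μ : Measure Ω}
    {w : Ω → ℝ} (hwi : Integrable w μ) (hw0 : ∀ x, 0 ≤ w x) (c : ℝ) (hc : 0 ≤ c) :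
    Integrable (fun x => max (w x - c) 0) μ := by
  refine hwi.mono' ((hwi.aestronglyMeasurable.sub aestronglyMeasurable_const).sup
    aestronglyMeasurable_const) (Filter.Eventually.of_forall fun x => ?_)
  rw [Real.norm_eq_abs, abs_of_nonneg (le_max_right _ _)]
  have := hw0 x
  rw [max_le_iff]; constructor <;> linarith

open Filter in
private lemma tail_tendsto {Ω : Type*} [MeasurableSpace Ω] {μ : Measure Ω}
    {w : Ω → ℝ} (hwi : Integrable w μ) (hw0 : ∀ x, 0 ≤ w x) :
    Tendsto (fun n : ℕ => ∫ x, max (w x - n) 0 ∂μ) atTop (nhds 0) := by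
  have h := tendsto_integral_of_dominated_convergence (μ := μ)
    (F := fun n : ℕ => fun x => max (w x - n) 0) (f := fun _ => (0:ℝ)) w
    (fun n => (tail_integrable hwi hw0 n (Nat.cast_nonneg n)).aestronglyMeasurable)
    hwi
    (fun n => Filter.Eventually.of_forall fun x => by
      rw [Real.norm_eq_abs, abs_of_nonneg (le_max_right _ _)]
      have := hw0 x
      have : (0:ℝ) ≤ n := Nat.cast_nonneg n
      rw [max_le_iff]; constructor <;> linarith [hw0 x])
    (Filter.Eventually.of_forall fun x => by
      apply Tendsto.congr' _ tendsto_const_nhds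
      filter_upwards [eventually_ge_atTop ⌈w x⌉₊] with n hn
      have : w x ≤ n := le_trans (Nat.le_ceil _) (Nat.cast_le.mpr hn)
      rw [max_eq_right (by linarith)])
  simpa using h

/-- For a probability density `w` w.r.t. `μ` and `α ∈ (0,1)`, the dual
objective `Φ(t) = (1-α)t - ∫ (t·w - 1)₊ dμ` satisfies: there exists `t₀ > 0` with
`Φ(t) ≥ t(1-α)/2 > 0` for all `t ∈ (0, t₀)`. -/
theorem dual_objective_positive_near_zero {Ω : Type*} [MeasurableSpace Ω]
    (μ : Measure Ω)
    (w : Ω → ℝ) (hwi : Integrable w μ) (hw0 : ∀ x, 0 ≤ w x)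
    (hw1 : ∫ x, w x ∂μ = 1) (α : ℝ) (hα : α ∈ Set.Ioo (0 : ℝ) 1) :
    ∃ t₀ > (0 : ℝ), ∀ t : ℝ, 0 < t → t < t₀ →
      0 < t * (1 - α) / 2 ∧
      t * (1 - α) / 2 ≤ (1 - α) * t - ∫ x, max (t * w x - 1) 0 ∂μ := by
  obtain ⟨hα0, hα1⟩ := hα
  have hεpos : 0 < (1 - α) / 2 := by linarith
  obtain ⟨N, hN⟩ := (Filter.tendsto_atTop'.mp (tail_tendsto hwi hw0)
    (Set.Iio ((1 - α) / 2)) (Iio_mem_nhds hεpos))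
  have hNint := tail_integrable hwi hw0 N (Nat.cast_nonneg N)
  have hNval : ∫ x, max (w x - N) 0 ∂μ < (1 - α) / 2 := hN N le_rfl
  refine ⟨1 / (N + 1), by positivity, fun t ht ht' => ?_⟩
  have htN : t * N < 1 := by
    have h1 : t * ((N:ℝ) + 1) < 1 := by
      have := (lt_div_iff₀ (show (0:ℝ) < (N:ℝ)+1 by positivity)).mp ht'
      linarith
    nlinarith [ht.le]
  constructor
  · nlinarith
  · have hptw : ∀ x, max (t * w x - 1) 0 ≤ t * max (w x - N) 0 := by
      intro x
      have hw := hw0 x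
      rw [max_le_iff]
      refine ⟨?_, mul_nonneg ht.le (le_max_right _ _)⟩
      rcases le_or_gt (w x) N with h | h
      · have h2 : t * w x - 1 ≤ 0 := by nlinarith
        exact le_trans h2 (mul_nonneg ht.le (le_max_right _ _))
      · rw [max_eq_left (by linarith)]
        nlinarith
    have hintL : Integrable (fun x => max (t * w x - 1) 0) μ := by
      refine (hwi.const_mul t).mono' (((hwi.const_mul t).aestronglyMeasurable.sub
        aestronglyMeasurable_const).sup aestronglyMeasurable_const)
        (Filter.Eventually.of_forall fun x => ?_)
      rw [Real.norm_eq_abs, abs_of_nonneg (le_max_right _ _)]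
      have := hw0 x
      rw [max_le_iff]
      constructor <;> nlinarith
    have hle : ∫ x, max (t * w x - 1) 0 ∂μ ≤ t * ∫ x, max (w x - N) 0 ∂μ := by
      rw [← integral_const_mul]
      exact integral_mono hintL (hNint.const_mul t) hptw
    have : t * ∫ x, max (w x - N) 0 ∂μ ≤ t * ((1 - α) / 2) :=
      mul_le_mul_of_nonneg_left hNval.le ht.le
    linarith
end

section
/- Let G and G_n be CDFs on ℝ with sup_t |G_n(t) - G(t)| → 0. Fix α ∈ (0,1) and let Q_α(G) = {q : G(q⁻) ≤ α ≤ G(q)} be the generalized α-quantile set of G. If q_n satisfies G_n(q_n⁻) ≤ α ≤ G_n(q_n), then dist(q_n, Q_α(G)) = inf_{q ∈ Q_α(G)} |q_n - q| → 0. In particular, if Q_α(G) = {q*} is a singleton, then q_n → q*. -/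
open Filter

/-- If CDFs `G_n → G` uniformly and `q_n` is a generalized α-quantile of
`G_n`, then `dist(q_n, Q_α(G)) → 0`; in particular if `Q_α(G) = {q*}` then `q_n → q*`. -/
theorem quantile_stability (G : ℝ → ℝ) (Gn : ℕ → ℝ → ℝ)
    (hG : Monotone G) (hGrc : ∀ x, ContinuousWithinAt G (Set.Ici x) x)
    (hG0 : Tendsto G atBot (nhds 0)) (hG1 : Tendsto G atTop (nhds 1))
    (hGn : ∀ n, Monotone (Gn n))
    (hunif : ∀ ε > (0 : ℝ), ∃ N, ∀ n ≥ N, ∀ t, |Gn n t - G t| ≤ ε)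
    (α : ℝ) (hα : α ∈ Set.Ioo (0 : ℝ) 1)
    (q : ℕ → ℝ)
    (hq : ∀ n, Function.leftLim (Gn n) (q n) ≤ α ∧ α ≤ Gn n (q n)) :
    Tendsto (fun n => Metric.infDist (q n)
        {t | Function.leftLim G t ≤ α ∧ α ≤ G t}) atTop (nhds 0)
    ∧ ∀ qstar : ℝ, {t | Function.leftLim G t ≤ α ∧ α ≤ G t} = {qstar} →
        Tendsto q atTop (nhds qstar) := by
  obtain ⟨hα0, hα1⟩ := hα
  set Q : Set ℝ := {t | Function.leftLim G t ≤ α ∧ α ≤ G t} with hQdef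
  obtain ⟨t1, ht1⟩ := (hG1.eventually (eventually_gt_nhds hα1)).exists
  obtain ⟨t0, ht0⟩ := (hG0.eventually (eventually_lt_nhds hα0)).exists
  have hS1ne : {t : ℝ | α ≤ G t}.Nonempty := ⟨t1, ht1.le⟩
  have hS2ne : {t : ℝ | G t ≤ α}.Nonempty := ⟨t0, ht0.le⟩
  have hS1bdd : BddBelow {t : ℝ | α ≤ G t} := ⟨t0, fun s hs => by
    by_contra h
    push_neg at h
    exact absurd (le_trans hs (hG h.le)) (not_le.2 ht0)⟩
  have hS2bdd : BddAbove {t : ℝ | G t ≤ α} := ⟨t1, fun s hs => by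
    by_contra h
    push_neg at h
    exact absurd (le_trans (hG h.le) hs) (not_le.2 ht1)⟩
  set a := sInf {t : ℝ | α ≤ G t} with ha
  set b := sSup {t : ℝ | G t ≤ α} with hb
  -- below a, G < α
  have claim2 : ∀ t, t < a → G t < α := by
    intro t ht
    by_contra h
    push_neg at h
    exact absurd (csInf_le hS1bdd h) (not_le.2 ht)
  -- above b, G > α
  have claim3 : ∀ t, b < t → α < G t := by
    intro t ht
    by_contra h
    push_neg at h
    exact absurd (le_csSup hS2bdd h) (not_le.2 ht)
  -- below b, G ≤ α
  have claim1 : ∀ t, t < b → G t ≤ α := by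
    intro t ht
    obtain ⟨s, hs, hts⟩ := exists_lt_of_lt_csSup hS2ne ht
    exact le_trans (hG hts.le) hs
  -- α ≤ G a
  have hGa : α ≤ G a := by
    by_contra h
    push_neg at h
    have hev : ∀ᶠ t in nhdsWithin a (Set.Ici a), G t < α :=
      (hGrc a).eventually (eventually_lt_nhds h)
    rw [eventually_iff, Metric.mem_nhdsWithin_iff] at hev
    obtain ⟨δ, hδ, hδ'⟩ := hev
    obtain ⟨s, hs, hs'⟩ := Real.lt_sInf_add_pos hS1ne hδ
    have has : a ≤ s := csInf_le hS1bdd hs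
    have : G s < α := hδ' ⟨by
      rw [Metric.mem_ball, Real.dist_eq, abs_of_nonneg (by linarith)]; linarith, has⟩
    exact absurd hs (not_le.2 this)
  -- α ≤ G b
  have hGb : α ≤ G b := by
    have htd : Tendsto G (nhdsWithin b (Set.Ioi b)) (nhds (G b)) :=
      (hGrc b).mono Set.Ioi_subset_Ici_self
    exact ge_of_tendsto htd (eventually_mem_nhdsWithin.mono fun t ht => (claim3 t ht).le)
  have hab : a ≤ b := by
    by_contra h
    push_neg at h
    have h1 := claim2 ((a + b) / 2) (by linarith)
    have h2 := claim3 ((a + b) / 2) (by linarith)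
    linarith
  -- [a, b] ⊆ Q
  have hmemQ : ∀ p : ℝ, a ≤ p → p ≤ b → p ∈ Q := by
    intro p h1 h2
    refine ⟨?_, le_trans hGa (hG h1)⟩
    exact le_of_tendsto (hG.tendsto_leftLim p)
      (eventually_mem_nhdsWithin.mono fun t ht => claim1 t (lt_of_lt_of_le ht h2))
  have hQne : Q.Nonempty := ⟨a, hmemQ a le_rfl hab⟩
  -- eventually q n ∈ [a - ε, b + ε]
  have key : ∀ ε > (0 : ℝ), ∃ N, ∀ n ≥ N, a - ε ≤ q n ∧ q n ≤ b + ε := by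
    intro ε hε
    have h2 : G (a - ε) < α := claim2 _ (by linarith)
    have h3 : α < G (b + ε) := claim3 _ (by linarith)
    set δ := min (α - G (a - ε)) (G (b + ε) - α) / 2 with hδdef
    have hδa : δ ≤ (α - G (a - ε)) / 2 := by
      have := min_le_left (α - G (a - ε)) (G (b + ε) - α); linarith
    have hδb : δ ≤ (G (b + ε) - α) / 2 := by
      have := min_le_right (α - G (a - ε)) (G (b + ε) - α); linarith
    have hδ : 0 < δ := by
      have := lt_min (by linarith : (0:ℝ) < α - G (a - ε))
        (by linarith : (0:ℝ) < G (b + ε) - α)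
      linarith
    obtain ⟨N, hN⟩ := hunif δ hδ
    refine ⟨N, fun n hn => ⟨?_, ?_⟩⟩
    · by_contra h
      push_neg at h
      have h4 : Gn n (q n) ≤ Gn n (a - ε) := hGn n h.le
      have h5 := abs_le.mp (hN n hn (a - ε))
      have h6 := (hq n).2
      linarith [h5.1, h5.2]
    · by_contra h
      push_neg at h
      have h4 : Gn n (b + ε) ≤ Function.leftLim (Gn n) (q n) := (hGn n).le_leftLim h
      have h5 := abs_le.mp (hN n hn (b + ε))
      have h6 := (hq n).1
      linarith [h5.1, h5.2]
  -- infDist bound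
  have hdist : ∀ ε > (0 : ℝ), ∃ N, ∀ n ≥ N, Metric.infDist (q n) Q ≤ ε := by
    intro ε hε
    obtain ⟨N, hN⟩ := key ε hε
    refine ⟨N, fun n hn => ?_⟩
    obtain ⟨h1, h2⟩ := hN n hn
    set p := min (max (q n) a) b with hp
    have hpa : a ≤ p := le_min (le_max_right _ _) hab
    have hpb : p ≤ b := min_le_right _ _
    have hpQ : p ∈ Q := hmemQ p hpa hpb
    have habs : |q n - p| ≤ ε := by
      rcases le_total (q n) a with h | h
      · have hpe : p = a := by rw [hp, max_eq_right h, min_eq_left hab]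
        rw [hpe, abs_le]; constructor <;> linarith
      · rcases le_total (q n) b with h' | h'
        · have hpe : p = q n := by rw [hp, max_eq_left h, min_eq_left h']
          rw [hpe, sub_self, abs_zero]; linarith
        · have hpe : p = b := by rw [hp, max_eq_left h, min_eq_right h']
          rw [hpe, abs_le]; constructor <;> linarith
    calc Metric.infDist (q n) Q ≤ dist (q n) p := Metric.infDist_le_dist_of_mem hpQ
      _ = |q n - p| := Real.dist_eq _ _
      _ ≤ ε := habs
  have htend : Tendsto (fun n => Metric.infDist (q n) Q) atTop (nhds 0) := by
    rw [Metric.tendsto_atTop]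
    intro ε hε
    obtain ⟨N, hN⟩ := hdist (ε / 2) (half_pos hε)
    refine ⟨N, fun n hn => ?_⟩
    rw [Real.dist_eq, sub_zero, abs_of_nonneg Metric.infDist_nonneg]
    exact lt_of_le_of_lt (hN n hn) (by linarith)
  refine ⟨htend, fun qstar hQs => ?_⟩
  rw [tendsto_iff_dist_tendsto_zero]
  simpa only [hQs, Metric.infDist_singleton] using htend
end

section
/- Let the MDCP acceptance region on a finite grid y^{(0)} < y^{(1)} < ... < y^{(M-1)} with uniform spacing Δ be J = {j : p(y^{(j)}) ≥ α}, decomposed into maximal consecutive blocks B_r = {j_{r,L},...,j_{r,R}}, and set C_grid = ∪_r [y^{(j_{r,L})} - Δ, y^{(j_{r,R})} + Δ]. Let C = C_MDCP ∩ [y_L, y_U] where C_MDCP = {y : p(y) ≥ α}, and suppose each connected component of C is a closed interval [ℓ, r] intersecting the grid. Then C ⊆ C_grid ∩ [y_L - Δ, y_U + Δ]. -/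
/-- Grid-search superset property. On the uniform grid
`y j = y_L + j·Δ`, `j = 0,…,M-1`, with acceptance indices
`J = {j < M : p(y j) ≥ α}` decomposed into consecutive blocks
`[jL r, jR r]`, and `C_grid = ⋃_r [y (jL r) - Δ, y (jR r) + Δ]`, if
`C = {y : p(y) ≥ α} ∩ [y_L, y_U]` and each connected component of `C` is a closed
interval containing a grid point, then `C ⊆ C_grid ∩ [y_L - Δ, y_U + Δ]`. -/
theorem grid_search_superset (M : ℕ) (hM : 2 ≤ M) (yL Δ : ℝ) (hΔ : 0 < Δ)
    (p : ℝ → ℝ) (α : ℝ) (hα : α ∈ Set.Ioo (0 : ℝ) 1)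
    (y : ℕ → ℝ) (hy : ∀ j, y j = yL + j * Δ)
    (yU : ℝ) (hyU : yU = y (M - 1))
    (R : ℕ) (jL jR : Fin R → ℕ)
    (hblk : ∀ r, jL r ≤ jR r ∧ jR r < M)
    (hJ : ∀ j : ℕ, (j < M ∧ α ≤ p (y j)) ↔ ∃ r, jL r ≤ j ∧ j ≤ jR r)
    (C : Set ℝ) (hC : C = {t | α ≤ p t} ∩ Set.Icc yL yU)
    (hcomp : ∀ t ∈ C, ∃ l r, l ≤ r ∧ t ∈ Set.Icc l r ∧ Set.Icc l r ⊆ C ∧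
      ∃ j, j < M ∧ y j ∈ Set.Icc l r) :
    C ⊆ (⋃ r : Fin R, Set.Icc (y (jL r) - Δ) (y (jR r) + Δ)) ∩
        Set.Icc (yL - Δ) (yU + Δ) := by
  classical
  intro t ht
  have hty : t ∈ Set.Icc yL yU := by rw [hC] at ht; exact ht.2
  obtain ⟨l, r, hlr, htlr, hsub, j0, hj0M, hj0⟩ := hcomp t ht
  have hmono : ∀ a b : ℕ, a ≤ b → y a ≤ y b := by
    intro a b hab
    rw [hy, hy]
    have h1 : (a : ℝ) ≤ b := by exact_mod_cast hab
    nlinarith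
  have hstep : ∀ k : ℕ, y (k + 1) = y k + Δ := by
    intro k; rw [hy, hy]; push_cast; ring
  have hexP : ∃ j, j < M ∧ y j ∈ Set.Icc l r := ⟨j0, hj0M, hj0⟩
  set j1 := Nat.find hexP with hj1def
  have hPj1 : j1 < M ∧ y j1 ∈ Set.Icc l r := Nat.find_spec hexP
  have hj0le : j0 ≤ M - 1 := by omega
  set j2 := Nat.findGreatest (fun j => y j ∈ Set.Icc l r) (M - 1) with hj2def
  have hj2spec : y j2 ∈ Set.Icc l r := Nat.findGreatest_spec (P := fun j => y j ∈ Set.Icc l r) hj0le hj0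
  have hj2le : j2 ≤ M - 1 := Nat.findGreatest_le _
  have hj2M : j2 < M := by omega
  have hj1j2 : j1 ≤ j2 := Nat.le_findGreatest (P := fun j => y j ∈ Set.Icc l r) (by omega) hPj1.2
  have hJmem : ∀ j, j1 ≤ j → j ≤ j2 → ∃ ρ : Fin R, jL ρ ≤ j ∧ j ≤ jR ρ := by
    intro j h1 h2
    have hyj : y j ∈ Set.Icc l r :=
      ⟨le_trans hPj1.2.1 (hmono _ _ h1), le_trans (hmono _ _ h2) hj2spec.2⟩
    have hyC : y j ∈ C := hsub hyj
    rw [hC] at hyC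
    exact (hJ j).1 ⟨by omega, hyC.1⟩
  have hlow : y j1 - Δ ≤ t := by
    rcases Nat.eq_zero_or_pos j1 with h0 | hpos
    · have hy0 : y 0 = yL := by rw [hy]; simp
      have : y j1 = yL := by rw [h0, hy0]
      linarith [hty.1]
    · obtain ⟨k, hk⟩ : ∃ k, j1 = k + 1 := ⟨j1 - 1, by omega⟩
      have hknot : ¬ (k < M ∧ y k ∈ Set.Icc l r) := Nat.find_min hexP (by omega)
      have hkM : k < M := by omega
      have hkl : y k < l := by
        by_contra h
        push_neg at h
        exact hknot ⟨hkM, h, le_trans (hmono k j1 (by omega)) hPj1.2.2⟩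
      have hst : y j1 = y k + Δ := by rw [hk]; exact hstep k
      linarith [htlr.1]
  have hhigh : t ≤ y j2 + Δ := by
    rcases eq_or_lt_of_le hj2le with heq | hlt
    · have h1 : t ≤ y (M - 1) := hyU ▸ hty.2
      have h2 : y (M - 1) = y j2 := by rw [heq]
      linarith
    · have hnot : ¬ (y (j2 + 1) ∈ Set.Icc l r) :=
        Nat.findGreatest_is_greatest (P := fun j => y j ∈ Set.Icc l r) (n := M - 1) (k := j2 + 1) (by omega) (by omega)
      have hge : l ≤ y (j2 + 1) := le_trans hj2spec.1 (hmono _ _ (by omega))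
      have hgt : r < y (j2 + 1) := by
        by_contra h; push_neg at h; exact hnot ⟨hge, h⟩
      have hst := hstep j2
      linarith [htlr.2]
  have key : ∃ j, j1 ≤ j ∧ j ≤ j2 ∧ y j - Δ ≤ t ∧ t ≤ y j + Δ := by
    rcases le_or_gt t (y j1) with hle | hgt
    · exact ⟨j1, le_refl _, hj1j2, hlow, by linarith⟩
    · set js := Nat.findGreatest (fun j => y j ≤ t) j2 with hjsdef
      have hjs1 : j1 ≤ js := Nat.le_findGreatest (P := fun j => y j ≤ t) hj1j2 (le_of_lt hgt)
      have hjs2 : js ≤ j2 := Nat.findGreatest_le _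
      have hjsp : y js ≤ t := Nat.findGreatest_spec (P := fun j => y j ≤ t) hj1j2 (le_of_lt hgt)
      have hup : t ≤ y js + Δ := by
        rcases eq_or_lt_of_le hjs2 with heq | hlt
        · rw [heq]; exact hhigh
        · have hnot : ¬ (y (js + 1) ≤ t) :=
            Nat.findGreatest_is_greatest (P := fun j => y j ≤ t) (n := j2) (k := js + 1) (by omega) (by omega)
          push_neg at hnot
          have hst := hstep js
          linarith
      exact ⟨js, hjs1, hjs2, by linarith, hup⟩
  obtain ⟨j, hja, hjb, hjl, hjh⟩ := key
  obtain ⟨ρ, hρ1, hρ2⟩ := hJmem j hja hjb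
  refine ⟨Set.mem_iUnion.2 ⟨ρ, ?_, ?_⟩, ?_, ?_⟩
  · have := hmono _ _ hρ1; linarith
  · have := hmono _ _ hρ2; linarith
  · linarith [hty.1]
  · linarith [hty.2]
end
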